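/- Let f(y) = Σ_{j=0}^d a_j y^j have integer coefficients with d ≥ 2, a_d ≥ 1, gcd(a_0,…,a_d) = 1, and suppose f is non-constant as a function modulo p for every prime p, so that by Lemma 6 there is δ_f ∈ (0,1) with |S(q',a',f)| ≤ (1−δ_f)q' for all q' > 1 and gcd(a',q') = 1. Then for every integer q > 1 and every a ∈ ℤ with gcd(a,q) = 1: Σ_{j=1}^∞ |S(q_j, ã_j, f)| / (j^{(d+1)/d} q_j) ≤ (1 − δ_f + δ_f · q^{−1−1/d}) · ζ(1 + 1/d) < (1 − δ_f/2) · ζ(1 + 1/d), where q_j := q/gcd(q,j), ã_j := a·j/gcd(q,j), and ζ is the Riemann zeta function. -/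

import Mathlib

/-- `f(y) = ∑_{j=0}^d a_j y^j` as a function on `ℤ`. -/
noncomputable def fZ (d : ℕ) (a : ℕ → ℤ) (y : ℤ) : ℤ :=
  ∑ j ∈ Finset.range (d + 1), a j * y ^ j

/-- `e(θ) = exp(2πiθ)`. -/
noncomputable def eC (θ : ℝ) : ℂ := Complex.exp (((2 * Real.pi * θ : ℝ) : ℂ) * Complex.I)

/-- `S(q, c, b, f) = ∑_{y=1}^q e((c f(y) + b y)/q)`. -/
noncomputable def SExp (d : ℕ) (a : ℕ → ℤ) (q : ℕ) (c b : ℤ) : ℂ :=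
  ∑ y ∈ Finset.Icc 1 q, eC (((c * fZ d a (y : ℤ) + b * (y : ℤ) : ℤ) : ℝ) / (q : ℝ))

/-- The Riemann zeta function at a real argument `s > 1`, as the series `∑_{n≥1} n^{-s}`. -/
noncomputable def zetaR (s : ℝ) : ℝ := ∑' n : ℕ, ((n : ℝ) + 1) ^ (-s)

/-!
Write `n = j + 1`, `g = gcd(q, n)` and `s = 1 + 1/d`. If `q ∣ n` the `n`-th term is
`|S(1, ·)| n^{-s} = n^{-s}`. Otherwise `q/g > 1` and `aa n/g` is coprime to `q/g`, so the
hypothesis on complete sums bounds the term by `(1 - δ) n^{-s}`. The series is therefore at most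
`(1 - δ) ζ(s)` plus `δ` times the sum of `n^{-s}` over the multiples of `q`, which is
`q^{-s} ζ(s)`. Finally `q^{-s} < q^{-1} ≤ 1/2`.
-/

lemma norm_eC (θ : ℝ) : ‖eC θ‖ = 1 := by
  simp [eC, Complex.norm_exp]

lemma norm_SExp_one (d : ℕ) (a : ℕ → ℤ) (c b : ℤ) : ‖SExp d a 1 c b‖ = 1 := by
  simp [SExp, norm_eC]

lemma tsum_nat_add_one_eq_tsum {α : Type*} [AddCommMonoid α] [TopologicalSpace α] {f : ℕ → α}
    (h0 : f 0 = 0) : ∑' n, f (n + 1) = ∑' n, f n :=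
  Nat.succ_injective.tsum_eq fun n hn =>
    (Nat.exists_eq_succ_of_ne_zero fun hn0 => hn (by rw [hn0, h0])).imp fun _ h => h.symm

lemma summable_nat_add_one_rpow_neg {s : ℝ} (hs : 1 < s) :
    Summable fun n : ℕ => ((n : ℝ) + 1) ^ (-s) := by
  simpa using (summable_nat_add_iff 1).mpr (Real.summable_nat_rpow.mpr (by linarith : -s < -1))

lemma zetaR_pos {s : ℝ} (hs : 1 < s) : 0 < zetaR s :=
  (summable_nat_add_one_rpow_neg hs).tsum_pos (fun _ => by positivity) 0 (by positivity)

lemma zetaR_eq_tsum_rpow_neg {s : ℝ} (hs : s ≠ 0) : zetaR s = ∑' n : ℕ, (n : ℝ) ^ (-s) := by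
  rw [zetaR, ← tsum_nat_add_one_eq_tsum (f := fun n : ℕ => (n : ℝ) ^ (-s))
    (by simp [Real.zero_rpow (neg_ne_zero.mpr hs)])]
  simp

lemma tsum_ite_dvd_add_one_rpow_neg {q : ℕ} (hq : 0 < q) {s : ℝ} (hs : s ≠ 0) :
    ∑' j : ℕ, (if q ∣ j + 1 then ((j : ℝ) + 1) ^ (-s) else 0) = (q : ℝ) ^ (-s) * zetaR s := by
  have h0 : (0 : ℝ) ^ (-s) = 0 := Real.zero_rpow (neg_ne_zero.mpr hs)
  set h : ℕ → ℝ := fun n => if q ∣ n then (n : ℝ) ^ (-s) else 0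
  have hsupp : Function.support h ⊆ Set.range (q * ·) := fun n hn => by
    by_contra hn'
    exact hn (if_neg fun ⟨m, hm⟩ => hn' ⟨m, hm.symm⟩)
  calc ∑' j : ℕ, (if q ∣ j + 1 then ((j : ℝ) + 1) ^ (-s) else 0) = ∑' n, h n := by
        rw [← tsum_nat_add_one_eq_tsum (f := h) (by simp [h, h0])]
        simp [h]
    _ = ∑' m : ℕ, h (q * m) := ((mul_right_injective₀ hq.ne').tsum_eq hsupp).symm
    _ = ∑' m : ℕ, (q : ℝ) ^ (-s) * (m : ℝ) ^ (-s) := by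
        congr 1 with m
        simp [h, Real.mul_rpow]
    _ = (q : ℝ) ^ (-s) * zetaR s := by rw [tsum_mul_left, zetaR_eq_tsum_rpow_neg hs]

lemma one_lt_div_gcd_of_not_dvd {q n : ℕ} (hq : 0 < q) (h : ¬ q ∣ n) : 1 < q / q.gcd n := by
  set g := q.gcd n
  obtain ⟨m, hm⟩ : g ∣ q := Nat.gcd_dvd_left q n
  rw [hm, Nat.mul_div_cancel_left m (Nat.gcd_pos_of_pos_left n hq)]
  rcases m with _ | _ | m
  · omega
  · rw [zero_add, mul_one] at hm
    exact absurd (hm ▸ Nat.gcd_dvd_right q n) h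
  · omega

lemma gcd_mul_div_gcd_div_gcd_eq_one {q : ℕ} (hq : 0 < q) {c : ℤ} (hc : Int.gcd c q = 1)
    (n : ℕ) : Int.gcd (c * n / (q.gcd n : ℤ)) ((q / q.gcd n : ℕ) : ℤ) = 1 := by
  have hgn : q.gcd n ∣ n := Nat.gcd_dvd_right q n
  rw [Int.mul_ediv_assoc c (Int.natCast_dvd_natCast.mpr hgn), ← Int.isCoprime_iff_gcd_eq_one]
  refine IsCoprime.mul_left ?_ ?_
  · exact (Int.isCoprime_iff_gcd_eq_one.mpr hc).of_isCoprime_of_dvd_right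
      (Int.natCast_dvd_natCast.mpr (Nat.div_dvd_of_dvd (Nat.gcd_dvd_left q n)))
  · rw [← Int.natCast_div, Nat.isCoprime_iff_coprime]
    exact (Nat.coprime_div_gcd_div_gcd (Nat.gcd_pos_of_pos_left n hq)).symm

lemma norm_SExp_reduced_div_le {d : ℕ} {a : ℕ → ℤ} {δ : ℝ}
    (hS : ∀ q' : ℕ, 1 < q' → ∀ a' : ℤ, Int.gcd a' (q' : ℤ) = 1 →
      ‖SExp d a q' a' 0‖ ≤ (1 - δ) * (q' : ℝ))
    {q : ℕ} (hq : 0 < q) {c : ℤ} (hc : Int.gcd c q = 1) (n : ℕ) :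
    ‖SExp d a (q / q.gcd n) (c * n / (q.gcd n : ℤ)) 0‖ / (q / q.gcd n : ℕ)
      ≤ 1 - δ + δ * if q ∣ n then 1 else 0 := by
  by_cases hqn : q ∣ n
  · simp [Nat.gcd_eq_left hqn, Nat.div_self hq, norm_SExp_one, hqn]
  · have hq' := one_lt_div_gcd_of_not_dvd hq hqn
    rw [if_neg hqn, mul_zero, add_zero, div_le_iff₀ (by positivity)]
    exact hS _ hq' _ (gcd_mul_div_gcd_div_gcd_eq_one hq hc n)

lemma tsum_mul_add_one_rpow_neg_le {q : ℕ} (hq : 0 < q) {s : ℝ} (hs : 1 < s) {δ : ℝ}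
    {w : ℕ → ℝ} (hw0 : ∀ n, 0 ≤ w n)
    (hw : ∀ n, w n ≤ 1 - δ + δ * if q ∣ n then 1 else 0) :
    ∑' j : ℕ, w (j + 1) * ((j : ℝ) + 1) ^ (-s) ≤ (1 - δ + δ * (q : ℝ) ^ (-s)) * zetaR s := by
  set k : ℕ → ℝ := fun j => ((j : ℝ) + 1) ^ (-s)
  set kq : ℕ → ℝ := fun j => if q ∣ j + 1 then k j else 0
  have hk : Summable k := summable_nat_add_one_rpow_neg hs
  have hkq : Summable kq :=
    hk.of_nonneg_of_le (fun j => by positivity) fun j => by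
      simp only [kq]
      split_ifs
      exacts [le_rfl, by positivity]
  have hle : ∀ j, w (j + 1) * k j ≤ (1 - δ) * k j + δ * kq j := fun j => by
    have := mul_le_mul_of_nonneg_right (hw (j + 1)) (by positivity : 0 ≤ k j)
    simp only [kq]
    split_ifs at this ⊢ <;> linarith
  have hsum : Summable fun j => (1 - δ) * k j + δ * kq j := (hk.mul_left _).add (hkq.mul_left _)
  calc ∑' j : ℕ, w (j + 1) * k j ≤ ∑' j, ((1 - δ) * k j + δ * kq j) :=
        (hsum.of_nonneg_of_le (fun j => mul_nonneg (hw0 _) (by positivity)) hle).tsum_le_tsum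
          hle hsum
    _ = (1 - δ + δ * (q : ℝ) ^ (-s)) * zetaR s := by
        rw [(hk.mul_left _).tsum_add (hkq.mul_left _), tsum_mul_left, tsum_mul_left,
          tsum_ite_dvd_add_one_rpow_neg hq (by positivity), zetaR]
        ring

theorem stmt12_general (d : ℕ) (hd : 2 ≤ d) (a : ℕ → ℤ)
    (δ : ℝ) (hδ0 : 0 < δ)
    (hS : ∀ q' : ℕ, 1 < q' → ∀ a' : ℤ, Int.gcd a' (q' : ℤ) = 1 →
      ‖SExp d a q' a' 0‖ ≤ (1 - δ) * (q' : ℝ))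
    (q : ℕ) (hq : 1 < q) (aa : ℤ) (haq : Int.gcd aa (q : ℤ) = 1) :
    (∑' j : ℕ, ‖SExp d a (q / Nat.gcd q (j + 1))
          ((aa * ((j : ℤ) + 1)) / (Nat.gcd q (j + 1) : ℤ)) 0‖ /
        (((j : ℝ) + 1) ^ (((d : ℝ) + 1) / (d : ℝ)) * ((q / Nat.gcd q (j + 1) : ℕ) : ℝ)))
      ≤ (1 - δ + δ * (q : ℝ) ^ (-(1 + 1 / (d : ℝ)))) * zetaR (1 + 1 / (d : ℝ)) ∧
    (1 - δ + δ * (q : ℝ) ^ (-(1 + 1 / (d : ℝ)))) * zetaR (1 + 1 / (d : ℝ))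
      < (1 - δ / 2) * zetaR (1 + 1 / (d : ℝ)) := by
  have hd0 : (d : ℝ) ≠ 0 := by exact_mod_cast (by omega : d ≠ 0)
  rw [show ((d : ℝ) + 1) / d = 1 + 1 / d by field_simp]
  set s := 1 + 1 / (d : ℝ)
  have hs : 1 < s := lt_add_of_pos_right 1 (by positivity)
  set w : ℕ → ℝ := fun n =>
    ‖SExp d a (q / q.gcd n) (aa * n / (q.gcd n : ℤ)) 0‖ / (q / q.gcd n : ℕ)
  have hterm : ∀ j : ℕ,
      ‖SExp d a (q / q.gcd (j + 1)) (aa * ((j : ℤ) + 1) / (q.gcd (j + 1) : ℤ)) 0‖ /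
        (((j : ℝ) + 1) ^ s * (q / q.gcd (j + 1) : ℕ)) = w (j + 1) * ((j : ℝ) + 1) ^ (-s) := by
    intro j
    rw [Real.rpow_neg (by positivity)]
    simp only [w]
    push_cast
    ring
  have hq_rpow : (q : ℝ) ^ (-s) < 1 / 2 := calc
    (q : ℝ) ^ (-s) < (q : ℝ) ^ (-1 : ℝ) :=
      Real.rpow_lt_rpow_of_exponent_lt (by exact_mod_cast hq) (by linarith)
    _ ≤ 1 / 2 := by
      rw [Real.rpow_neg_one, one_div]
      exact inv_anti₀ (by norm_num) (by exact_mod_cast hq)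
  refine ⟨?_, mul_lt_mul_of_pos_right (by nlinarith) (zetaR_pos hs)⟩
  rw [tsum_congr hterm]
  exact tsum_mul_add_one_rpow_neg_le (by omega) hs (fun n => by positivity)
    (norm_SExp_reduced_div_le hS (by omega) haq)

theorem stmt12 (d : ℕ) (hd : 2 ≤ d) (a : ℕ → ℤ) (had : 1 ≤ a d)
    (hgcd : Finset.gcd (Finset.range (d + 1)) a = 1)
    (hmod : ∀ p : ℕ, p.Prime →
      ∃ y₁ y₂ : ℤ, ¬ ((p : ℤ) ∣ (fZ d a y₁ - fZ d a y₂)))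
    (δ : ℝ) (hδ0 : 0 < δ) (hδ1 : δ < 1)
    (hS : ∀ q' : ℕ, 1 < q' → ∀ a' : ℤ, Int.gcd a' (q' : ℤ) = 1 →
      ‖SExp d a q' a' 0‖ ≤ (1 - δ) * (q' : ℝ))
    (q : ℕ) (hq : 1 < q) (aa : ℤ) (haq : Int.gcd aa (q : ℤ) = 1) :
    (∑' j : ℕ, ‖SExp d a (q / Nat.gcd q (j + 1))
          ((aa * ((j : ℤ) + 1)) / (Nat.gcd q (j + 1) : ℤ)) 0‖ /
        (((j : ℝ) + 1) ^ (((d : ℝ) + 1) / (d : ℝ)) * ((q / Nat.gcd q (j + 1) : ℕ) : ℝ)))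
      ≤ (1 - δ + δ * (q : ℝ) ^ (-(1 + 1 / (d : ℝ)))) * zetaR (1 + 1 / (d : ℝ)) ∧
    (1 - δ + δ * (q : ℝ) ^ (-(1 + 1 / (d : ℝ)))) * zetaR (1 + 1 / (d : ℝ))
      < (1 - δ / 2) * zetaR (1 + 1 / (d : ℝ)) :=
  stmt12_general d hd a δ hδ0 hS q hq aa haq
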